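/- In the semigroup B_ℤ^𝓕 with 𝓕 an ω-closed family of nonempty inductive subsets of ω, the natural partial order on idempotents satisfies: (i,i,[p)) ≼ (j,j,[q)) if and only if i ≥ j and [p) ⊆ (j - i) + [q), i.e., i ≥ j and i + p ≥ j + q. -/

import Mathlib

/-! Both case branches of `BZFop` on idempotents give `(max i j, max i j, ·)` with the
two sets shifted by `i - max i j` and `j - max i j`, so idempotents commute and `e ≼ f` reduces
to `ef = e`. That forces `max i j = i` and `[p) ⊆ (j - i) + [q)`, and `(j - i) + [q)` is the
ray of naturals `≥ j - i + q`. -/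

/-- A subset of ω is inductive if `i ∈ F` implies `i+1 ∈ F`. -/
def SInd (F : Set ℕ) : Prop := ∀ i ∈ F, i + 1 ∈ F

/-- `-n + F = {k : k + n ∈ F}`. -/
def negShift (n : ℕ) (F : Set ℕ) : Set ℕ := {k : ℕ | k + n ∈ F}

/-- A family of subsets of ω is ω-closed. -/
def OmegaClosed (𝓕 : Set (Set ℕ)) : Prop :=
  ∀ n : ℕ, ∀ F₁ ∈ 𝓕, ∀ F₂ ∈ 𝓕, F₁ ∩ negShift n F₂ ∈ 𝓕

/-- `m + F = {m + k : k ∈ F} ∩ ω` for `m : ℤ`. -/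
def zshift (m : ℤ) (F : Set ℕ) : Set ℕ := {x : ℕ | ∃ k ∈ F, (x : ℤ) = m + k}

/-- The semigroup operation on `B_ℤ^𝓕 ⊆ ℤ × ℤ × Set ℕ`. -/
def BZFop (a b : ℤ × ℤ × Set ℕ) : ℤ × ℤ × Set ℕ :=
  if a.2.1 ≤ b.1 then
    (a.1 - a.2.1 + b.1, b.2.1, zshift (a.2.1 - b.1) a.2.2 ∩ b.2.2)
  else
    (a.1, a.2.1 - b.1 + b.2.1, a.2.2 ∩ zshift (b.1 - a.2.1) b.2.2)

lemma zshift_zero (F : Set ℕ) : zshift 0 F = F := by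
  ext x
  simp [zshift]

lemma mem_zshift_Ici {m : ℤ} {q x : ℕ} : x ∈ zshift m (Set.Ici q) ↔ m + q ≤ x := by
  constructor
  · rintro ⟨k, hk, hx⟩
    have : (q : ℤ) ≤ k := by exact_mod_cast hk
    omega
  · intro h
    exact ⟨(x - m).toNat, by simp only [Set.mem_Ici]; omega, by omega⟩

lemma Ici_subset_zshift_Ici_iff {m : ℤ} {p q : ℕ} :
    Set.Ici p ⊆ zshift m (Set.Ici q) ↔ m + q ≤ p := by
  refine ⟨fun h ↦ mem_zshift_Ici.mp (h Set.self_mem_Ici), fun h x hx ↦ mem_zshift_Ici.mpr ?_⟩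
  have : (p : ℤ) ≤ x := by exact_mod_cast hx
  omega

lemma BZFop_idempotents (i j : ℤ) (F G : Set ℕ) :
    BZFop (i, i, F) (j, j, G) =
      (max i j, max i j, zshift (i - max i j) F ∩ zshift (j - max i j) G) := by
  unfold BZFop
  split_ifs with h
  · simp [max_eq_right h, zshift_zero]
  · simp [max_eq_left (le_of_not_ge h), zshift_zero]

lemma BZFop_idempotents_comm (i j : ℤ) (F G : Set ℕ) :
    BZFop (i, i, F) (j, j, G) = BZFop (j, j, G) (i, i, F) := by
  rw [BZFop_idempotents, BZFop_idempotents, max_comm, Set.inter_comm]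

/-- The natural partial order on idempotents of `B_ℤ^𝓕`:
`(i,i,[p)) ≼ (j,j,[q))` iff `i ≥ j` and `i + p ≥ j + q`. -/
theorem stmt14 (i j : ℤ) (p q : ℕ) :
    (BZFop (i, i, Set.Ici p) (j, j, Set.Ici q) = (i, i, Set.Ici p) ∧
     BZFop (j, j, Set.Ici q) (i, i, Set.Ici p) = (i, i, Set.Ici p)) ↔
    (j ≤ i ∧ j + (q : ℤ) ≤ i + (p : ℤ)) := by
  rw [BZFop_idempotents_comm j i, and_self, BZFop_idempotents, Prod.mk.injEq, Prod.mk.injEq]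
  constructor
  · rintro ⟨hmax, -, hset⟩
    have hji : j ≤ i := max_eq_left_iff.mp hmax
    rw [hmax, sub_self, zshift_zero, Set.inter_eq_left, Ici_subset_zshift_Ici_iff] at hset
    exact ⟨hji, by omega⟩
  · rintro ⟨hji, hpq⟩
    rw [max_eq_left hji, sub_self, zshift_zero, Set.inter_eq_left, Ici_subset_zshift_Ici_iff]
    exact ⟨rfl, rfl, by omega⟩
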